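/- Let Θ be a type, N ≥ 1, U : Θ → Fin N → ℝ, and θ̃ ∈ Θ with P = ∑ᵢ U_θ̃(i) > 0; set pᵢ = U_θ̃(i)/P and 𝒰_p(θ) = ∑ᵢ U_θ(i)·pᵢ. If θ̃ maximizes θ ↦ 𝒰(θ) = (1/N)·∑ᵢ U_θ(i), then for every θ ∈ Θ, 𝒰_p(θ̃) − 𝒰_p(θ) ≥ (1/P)·(V̂ar[U_θ̃] − Ĉov[U_θ, U_θ̃]). In particular, the advantage of the curriculum objective at the optimum over any other parameter is bounded below by (1/P) times the gap between the variance of the optimal scores and the covariance of the current scores with the optimal scores (quantitative claim behind the objective of Section 3.2 and Theorem 4 of the paper). -/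

import Mathlib

/-! Under the self-taught prior the curriculum objective is the plain objective shifted by a
covariance, `𝒰_p(θ) = 𝒰(θ) + (1/P)·Ĉov[U_θ, U_θ̃]`, so the difference of the two sides of the
inequality is exactly `𝒰(θ̃) − 𝒰(θ) ≥ 0`. -/

namespace Empirical

variable {ι : Type*} [Fintype ι]

noncomputable def mean (f : ι → ℝ) : ℝ := (1 / Fintype.card ι) * ∑ i, f i

/-- Not divided by the number of samples, as in the paper's `Ĉov`. -/
noncomputable def cov (f g : ι → ℝ) : ℝ := ∑ i, (f i - mean f) * (g i - mean g)

theorem cov_eq_sum_mul_sub (f g : ι → ℝ) :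
    cov f g = ∑ i, f i * g i - (1 / Fintype.card ι) * (∑ i, f i) * ∑ i, g i := by
  rcases isEmpty_or_nonempty ι with _ | _
  · simp [cov]
  have hcard : (Fintype.card ι : ℝ) ≠ 0 := by positivity
  simp only [cov, mean, sub_mul, mul_sub, Finset.sum_sub_distrib, ← Finset.sum_mul,
    ← Finset.mul_sum, Finset.sum_const, Finset.card_univ, nsmul_eq_mul]
  field_simp
  ring

theorem sum_mul_div_sum_eq_mean_add_cov (f g : ι → ℝ) (hg : ∑ i, g i ≠ 0) :
    ∑ i, f i * (g i / ∑ j, g j) = mean f + (1 / ∑ j, g j) * cov f g := by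
  rw [cov_eq_sum_mul_sub, mean]
  simp only [mul_div_assoc', ← Finset.sum_div]
  field_simp
  ring

end Empirical

open Empirical in
theorem selfTaught_curriculum_advantage_general
    {Θ : Type*} (N : ℕ) (U : Θ → Fin N → ℝ) (θopt : Θ)
    (hP : 0 < ∑ i, U θopt i)
    (hmax : ∀ θ : Θ, (1 / N) * (∑ i, U θ i) ≤ (1 / N) * (∑ i, U θopt i)) :
    ∀ θ : Θ,
      (∑ i, U θopt i * (U θopt i / (∑ j, U θopt j))) -
          (∑ i, U θ i * (U θopt i / (∑ j, U θopt j))) ≥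
        (1 / (∑ j, U θopt j)) *
          ((∑ i, (U θopt i - (1 / N) * ∑ j, U θopt j) ^ 2) -
            ∑ i, (U θ i - (1 / N) * ∑ j, U θ j) *
              (U θopt i - (1 / N) * ∑ j, U θopt j)) := by
  intro θ
  have hcur := sum_mul_div_sum_eq_mean_add_cov (U θ) (U θopt) hP.ne'
  have hopt := sum_mul_div_sum_eq_mean_add_cov (U θopt) (U θopt) hP.ne'
  simp only [cov, mean, Fintype.card_fin, ← sq] at hcur hopt
  rw [hcur, hopt]
  linarith [hmax θ]

/-- Quantitative curriculum advantage: with the self-taught prior, if `θ̃`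
maximizes the plain objective, the advantage of the curriculum objective at `θ̃`
over any `θ` is at least `(1/P)·(Var[U_θ̃] − Cov[U_θ, U_θ̃])`. -/
theorem selfTaught_curriculum_advantage
    {Θ : Type*} (N : ℕ) (hN : 1 ≤ N) (U : Θ → Fin N → ℝ) (θopt : Θ)
    (hP : 0 < ∑ i, U θopt i)
    (hmax : ∀ θ : Θ, (1 / N) * (∑ i, U θ i) ≤ (1 / N) * (∑ i, U θopt i)) :
    ∀ θ : Θ,
      (∑ i, U θopt i * (U θopt i / (∑ j, U θopt j))) -
          (∑ i, U θ i * (U θopt i / (∑ j, U θopt j))) ≥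
        (1 / (∑ j, U θopt j)) *
          ((∑ i, (U θopt i - (1 / N) * ∑ j, U θopt j) ^ 2) -
            ∑ i, (U θ i - (1 / N) * ∑ j, U θ j) *
              (U θopt i - (1 / N) * ∑ j, U θopt j)) :=
  selfTaught_curriculum_advantage_general N U θopt hP hmax
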